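/- Let f ~ 𝒩(μ, σ²) with σ > 0 and incumbent m. The expected improvement EI(μ, σ, m) = (m-μ)Φ((m-μ)/σ) + σφ((m-μ)/σ) satisfies: EI > 0, EI is strictly increasing in σ for fixed μ, m, and EI is strictly decreasing in μ for fixed σ, m. -/

import Mathlib

/-- The standard normal probability density function. -/
noncomputable def stdNormalPDF (z : ℝ) : ℝ :=
  (Real.sqrt (2 * Real.pi))⁻¹ * Real.exp (-z ^ 2 / 2)

/-- The standard normal cumulative distribution function. -/
noncomputable def stdNormalCDF (z : ℝ) : ℝ :=
  ∫ u in Set.Iic z, stdNormalPDF u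

/-- Closed-form expected improvement for a Gaussian with mean `μ`, standard
deviation `σ`, over incumbent `m`. -/
noncomputable def EI (μ σ m : ℝ) : ℝ :=
  (m - μ) * stdNormalCDF ((m - μ) / σ) + σ * stdNormalPDF ((m - μ) / σ)

open MeasureTheory Set Real

lemma pdf_pos (z : ℝ) : 0 < stdNormalPDF z := by
  have : 0 < Real.sqrt (2 * Real.pi) := Real.sqrt_pos.2 (by positivity)
  exact mul_pos (inv_pos.2 this) (Real.exp_pos _)

lemma pdf_continuous : Continuous stdNormalPDF := by
  unfold stdNormalPDF; fun_prop

lemma pdf_integrable : Integrable stdNormalPDF := by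
  have h := (integrable_exp_neg_mul_sq (by norm_num : (0:ℝ) < 1/2)).const_mul
    (Real.sqrt (2 * Real.pi))⁻¹
  refine h.congr (Filter.Eventually.of_forall fun x => ?_)
  unfold stdNormalPDF
  show _ = (Real.sqrt (2 * Real.pi))⁻¹ * Real.exp (-x ^ 2 / 2)
  rw [show -x ^ 2 / 2 = -(1 / 2) * x ^ 2 from by ring]

lemma mul_pdf_integrable : Integrable (fun u => u * stdNormalPDF u) := by
  have h := (integrable_mul_exp_neg_mul_sq (by norm_num : (0:ℝ) < 1/2)).const_mul
    (Real.sqrt (2 * Real.pi))⁻¹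
  refine h.congr (Filter.Eventually.of_forall fun x => ?_)
  unfold stdNormalPDF
  show _ = x * ((Real.sqrt (2 * Real.pi))⁻¹ * Real.exp (-x ^ 2 / 2))
  rw [show -x ^ 2 / 2 = -(1 / 2) * x ^ 2 from by ring]
  ring

lemma hasDerivAt_pdf (z : ℝ) : HasDerivAt stdNormalPDF (-z * stdNormalPDF z) z := by
  have h1 : HasDerivAt (fun z : ℝ => -z ^ 2 / 2) (-z) z := by
    have := ((hasDerivAt_pow 2 z).neg).div_const 2
    simpa using this.congr_deriv (by ring)
  have h2 := (h1.exp).const_mul (Real.sqrt (2 * Real.pi))⁻¹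
  unfold stdNormalPDF
  refine h2.congr_deriv ?_
  ring

lemma hasDerivAt_cdf (z : ℝ) : HasDerivAt stdNormalCDF (stdNormalPDF z) z := by
  have key : ∀ x : ℝ, stdNormalCDF x = stdNormalCDF 0 + ∫ u in (0:ℝ)..x, stdNormalPDF u := by
    intro x
    unfold stdNormalCDF
    rw [← intervalIntegral.integral_Iic_sub_Iic pdf_integrable.integrableOn
      pdf_integrable.integrableOn]
    ring
  have hd : HasDerivAt (fun x => ∫ u in (0:ℝ)..x, stdNormalPDF u) (stdNormalPDF z) z :=
    intervalIntegral.integral_hasDerivAt_right pdf_integrable.intervalIntegrable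
      (pdf_continuous.stronglyMeasurableAtFilter _ _) pdf_continuous.continuousAt
  have := (hd.const_add (stdNormalCDF 0))
  exact this.congr_of_eventuallyEq (Filter.Eventually.of_forall fun x => key x)

lemma cdf_pos (z : ℝ) : 0 < stdNormalCDF z := by
  unfold stdNormalCDF
  rw [setIntegral_pos_iff_support_of_nonneg_ae
    (Filter.Eventually.of_forall fun u => (pdf_pos u).le) pdf_integrable.integrableOn]
  have : Function.support stdNormalPDF = univ := by
    ext u; simp [Function.mem_support, (pdf_pos u).ne']
  rw [this, univ_inter]
  simp [Real.volume_Iic]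

lemma pdf_tendsto_atBot : Filter.Tendsto stdNormalPDF Filter.atBot (nhds 0) := by
  have hneg : Filter.Tendsto (fun z : ℝ => -z) Filter.atBot Filter.atTop :=
    Filter.tendsto_neg_atBot_atTop
  have hp : Filter.Tendsto (fun y : ℝ => y ^ 2) Filter.atTop Filter.atTop :=
    Filter.tendsto_pow_atTop (two_ne_zero)
  have h1 : Filter.Tendsto (fun z : ℝ => z ^ 2) Filter.atBot Filter.atTop :=
    (hp.comp hneg).congr fun x => by simp [Function.comp]
  have hneg2 : Filter.Tendsto (fun y : ℝ => -y) Filter.atTop Filter.atBot :=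
    Filter.tendsto_neg_atTop_atBot
  have h2 : Filter.Tendsto (fun z : ℝ => -z ^ 2 / 2) Filter.atBot Filter.atBot := by
    have := (hneg2.comp h1).atBot_div_const (by norm_num : (0:ℝ) < 2)
    exact this.congr fun x => rfl
  have h3 := Real.tendsto_exp_atBot.comp h2
  have := h3.const_mul (Real.sqrt (2 * Real.pi))⁻¹
  rw [show ((Real.sqrt (2 * Real.pi))⁻¹ * (0:ℝ)) = 0 from by ring] at this
  exact this.congr fun x => by simp [stdNormalPDF, Function.comp]

lemma integral_mul_pdf (z : ℝ) :
    ∫ u in Iic z, -u * stdNormalPDF u = stdNormalPDF z := by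
  have := integral_Iic_of_hasDerivAt_of_tendsto
    (f := stdNormalPDF) (f' := fun u => -u * stdNormalPDF u) (a := z) (m := 0)
    pdf_continuous.continuousWithinAt
    (fun x _ => hasDerivAt_pdf x)
    ((mul_pdf_integrable.neg.congr (Filter.Eventually.of_forall fun x => by simp only [Pi.neg_apply]; ring)).integrableOn)
    pdf_tendsto_atBot
  simpa using this

lemma g_pos (z : ℝ) : 0 < z * stdNormalCDF z + stdNormalPDF z := by
  have hint : IntegrableOn (fun u => (z - u) * stdNormalPDF u) (Iic z) := by
    have h1 : IntegrableOn (fun u => z * stdNormalPDF u) (Iic z) :=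
      (pdf_integrable.const_mul z).integrableOn
    have h2 : IntegrableOn (fun u => -u * stdNormalPDF u) (Iic z) :=
      (mul_pdf_integrable.neg.congr (Filter.Eventually.of_forall fun x => by simp only [Pi.neg_apply]; ring)).integrableOn
    exact MeasureTheory.IntegrableOn.congr_fun (h1.add h2) (fun u _ => by simp only [Pi.add_apply]; ring) measurableSet_Iic
  have key : z * stdNormalCDF z + stdNormalPDF z = ∫ u in Iic z, (z - u) * stdNormalPDF u := by
    rw [show (fun u => (z - u) * stdNormalPDF u)
        = (fun u => z * stdNormalPDF u + (-u) * stdNormalPDF u) from funext fun u => by ring]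
    rw [integral_add ((pdf_integrable.const_mul z).integrableOn)
      ((mul_pdf_integrable.neg.congr (Filter.Eventually.of_forall fun x => by simp only [Pi.neg_apply]; ring)).integrableOn),
      integral_mul_pdf, MeasureTheory.integral_const_mul]
    rfl
  rw [key]
  rw [setIntegral_pos_iff_support_of_nonneg_ae ?_ hint]
  · have hsub : Iio z ⊆ (Function.support fun u => (z - u) * stdNormalPDF u) ∩ Iic z := by
      intro u hu
      refine ⟨?_, mem_Iic.mpr (le_of_lt (mem_Iio.mp hu))⟩
      simp only [Function.mem_support]
      exact (mul_pos (by linarith [mem_Iio.mp hu]) (pdf_pos u)).ne'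
    calc (0:ENNReal) < volume (Iio z) := by simp [Real.volume_Iio]
      _ ≤ _ := measure_mono hsub
  · filter_upwards [ae_restrict_mem measurableSet_Iic] with u hu
    exact mul_nonneg (by linarith [mem_Iic.mp hu]) (pdf_pos u).le

lemma hasDerivAt_EI_sigma (μ m : ℝ) {σ : ℝ} (hσ : σ ≠ 0) :
    HasDerivAt (fun σ => EI μ σ m) (stdNormalPDF ((m - μ) / σ)) σ := by
  set c := m - μ
  have hz : HasDerivAt (fun σ : ℝ => c / σ) (c * (-(σ ^ 2)⁻¹)) σ := by
    simpa [div_eq_mul_inv] using (hasDerivAt_inv hσ).const_mul c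
  have h1 : HasDerivAt (fun σ : ℝ => stdNormalCDF (c / σ))
      (stdNormalPDF (c / σ) * (c * (-(σ ^ 2)⁻¹))) σ := (hasDerivAt_cdf _).comp σ hz
  have h2 : HasDerivAt (fun σ : ℝ => stdNormalPDF (c / σ))
      ((-(c / σ) * stdNormalPDF (c / σ)) * (c * (-(σ ^ 2)⁻¹))) σ := (hasDerivAt_pdf _).comp σ hz
  have h3 := (h1.const_mul c).add ((hasDerivAt_id σ).mul h2)
  have : c * (stdNormalPDF (c / σ) * (c * (-(σ ^ 2)⁻¹)))
      + (1 * stdNormalPDF (c / σ) + σ * ((-(c / σ) * stdNormalPDF (c / σ)) * (c * (-(σ ^ 2)⁻¹))))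
      = stdNormalPDF (c / σ) := by field_simp; ring
  simp only [id_eq] at h3
  rw [this] at h3
  exact h3.congr_of_eventuallyEq (Filter.Eventually.of_forall fun x => by simp [EI, c])

lemma hasDerivAt_EI_mu (σ m : ℝ) (hσ : σ ≠ 0) (μ : ℝ) :
    HasDerivAt (fun μ => EI μ σ m) (-stdNormalCDF ((m - μ) / σ)) μ := by
  have hz : HasDerivAt (fun μ : ℝ => (m - μ) / σ) (-σ⁻¹) μ := by
    simpa [div_eq_mul_inv] using ((hasDerivAt_id μ).const_sub m).mul_const σ⁻¹
  have h1 : HasDerivAt (fun μ : ℝ => stdNormalCDF ((m - μ) / σ))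
      (stdNormalPDF ((m - μ) / σ) * (-σ⁻¹)) μ := (hasDerivAt_cdf _).comp μ hz
  have h2 : HasDerivAt (fun μ : ℝ => stdNormalPDF ((m - μ) / σ))
      ((-((m - μ) / σ) * stdNormalPDF ((m - μ) / σ)) * (-σ⁻¹)) μ := (hasDerivAt_pdf _).comp μ hz
  have h3 := ((((hasDerivAt_id μ).const_sub m).mul h1)).add (h2.const_mul σ)
  have : (-1) * stdNormalCDF ((m - μ) / σ)
      + (m - μ) * (stdNormalPDF ((m - μ) / σ) * (-σ⁻¹))
      + σ * ((-((m - μ) / σ) * stdNormalPDF ((m - μ) / σ)) * (-σ⁻¹))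
      = -stdNormalCDF ((m - μ) / σ) := by field_simp; ring
  simp only [id_eq] at h3
  rw [this] at h3
  exact h3.congr_of_eventuallyEq (Filter.Eventually.of_forall fun x => by simp [EI])

theorem stmt_10 :
    (∀ μ σ m : ℝ, 0 < σ → 0 < EI μ σ m) ∧
    (∀ μ m : ℝ, StrictMonoOn (fun σ => EI μ σ m) (Set.Ioi (0 : ℝ))) ∧
    (∀ σ m : ℝ, 0 < σ → StrictAnti (fun μ => EI μ σ m)) := by
  refine ⟨?_, ?_, ?_⟩
  · intro μ σ m hσ
    have key : EI μ σ m
        = σ * ((m - μ) / σ * stdNormalCDF ((m - μ) / σ) + stdNormalPDF ((m - μ) / σ)) := by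
      unfold EI; field_simp
    rw [key]
    exact mul_pos hσ (g_pos _)
  · intro μ m
    apply strictMonoOn_of_deriv_pos (convex_Ioi 0)
    · intro x hx
      exact (hasDerivAt_EI_sigma μ m (ne_of_gt hx)).continuousAt.continuousWithinAt
    · intro x hx
      rw [interior_Ioi] at hx
      rw [(hasDerivAt_EI_sigma μ m (ne_of_gt hx)).deriv]
      exact pdf_pos _
  · intro σ m hσ
    apply strictAnti_of_deriv_neg
    intro x
    rw [(hasDerivAt_EI_mu σ m hσ.ne' x).deriv]
    simpa using cdf_pos ((m - x) / σ)
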